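/- For every σ > 0, let p_σ(x) denote the unique maximizer over p ∈ ℝ of A_σ(p; x) for x < 0. Then p_σ(x) = σ · m^{−1}(−x/σ), where m(p) = (1 − Φ(p)) / φ(p) is the standard Gaussian Mills ratio and m^{−1} its inverse; the map x ↦ p_σ(x) is strictly increasing on (−∞, 0), and p_σ(x) → −∞ as x → −∞. -/

import Mathlib

/-!
Writing `a = p / σ`, one has `A_σ(p; x) = (p - x)(1 - Φ(a)) - σ φ(a)`, whose derivative in `p`
is `φ(a) (m(a) + x / σ)`. The Mills ratio is a strictly decreasing bijection `ℝ → (0, ∞)`: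
`m' = p m - 1 < 0` because `p (1 - Φ(p)) < φ(p)`, and `m` tends to `∞` at `-∞` and to `0` at `∞`.
Hence for `x < 0` the derivative changes sign exactly once, from positive to negative, where
`m(p / σ) = -x / σ`; that point is the unique maximizer, and the monotonicity and the limit of
`p_σ` are those of `m⁻¹`.
-/

open MeasureTheory ProbabilityTheory Filter Set

/-- The standard normal density `φ`. -/
noncomputable def gaussPDF (t : ℝ) : ℝ := (Real.sqrt (2 * Real.pi))⁻¹ * Real.exp (-t ^ 2 / 2)

/-- The standard normal cumulative distribution function `Φ`. -/
noncomputable def gaussCDF (p : ℝ) : ℝ := ∫ t in Iic p, gaussPDF t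

/-- The standard Gaussian Mills ratio `m(p) = (1 − Φ(p))/φ(p)`. -/
noncomputable def mills (p : ℝ) : ℝ := (1 - gaussCDF p) / gaussPDF p

/-- `A_σ(p; x) = E[(p − x − σ·η)·1_{σ·η > p}]` with `η` standard normal. -/
noncomputable def Agauss (σ p x : ℝ) : ℝ :=
  ∫ t in {t : ℝ | σ * t > p}, (p - x - σ * t) ∂(gaussianReal 0 1)

open Function Topology

lemma setIntegral_Ioi_pos {f : ℝ → ℝ} {a : ℝ} (hf : IntegrableOn f (Ioi a))
    (hpos : ∀ t ∈ Ioi a, 0 < f t) : 0 < ∫ t in Ioi a, f t := by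
  have hsupp : Ioi a ⊆ support f := fun t ht => (hpos t ht).ne'
  rw [setIntegral_pos_iff_support_of_nonneg_ae
    (ae_restrict_of_forall_mem measurableSet_Ioi fun t ht => (hpos t ht).le) hf,
    inter_eq_right.mpr hsupp]
  simp

lemma lt_of_hasDerivAt_pos_of_neg {f f' : ℝ → ℝ} {c p : ℝ} (hf : ∀ q, HasDerivAt f (f' q) q)
    (hpos : ∀ q < c, 0 < f' q) (hneg : ∀ q, c < q → f' q < 0) (hp : p ≠ c) : f p < f c := by
  have hcont : Continuous f := continuous_iff_continuousAt.mpr fun q => (hf q).continuousAt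
  rcases hp.lt_or_gt with h | h
  · refine strictMonoOn_of_deriv_pos (convex_Iic c) hcont.continuousOn (fun q hq => ?_)
      h.le (mem_Iic.mpr le_rfl) h
    rw [interior_Iic] at hq
    exact (hf q).deriv ▸ hpos q hq
  · refine strictAntiOn_of_deriv_neg (convex_Ici c) hcont.continuousOn (fun q hq => ?_)
      (mem_Ici.mpr le_rfl) h.le h
    rw [interior_Ici] at hq
    exact (hf q).deriv ▸ hneg q hq

lemma gaussPDF_eq_gaussianPDFReal : gaussPDF = gaussianPDFReal 0 1 := by
  ext t
  simp [gaussPDF, gaussianPDFReal, neg_div]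

lemma gaussPDF_pos (t : ℝ) : 0 < gaussPDF t :=
  gaussPDF_eq_gaussianPDFReal ▸ gaussianPDFReal_pos 0 1 t one_ne_zero

lemma integrable_gaussPDF : Integrable gaussPDF :=
  gaussPDF_eq_gaussianPDFReal ▸ integrable_gaussianPDFReal 0 1

lemma integrable_mul_gaussPDF : Integrable fun t => t * gaussPDF t := by
  simpa [gaussPDF, mul_left_comm, neg_div, div_eq_inv_mul] using
    (integrable_mul_exp_neg_mul_sq (by norm_num : (0 : ℝ) < 2⁻¹)).const_mul
      (Real.sqrt (2 * Real.pi))⁻¹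

lemma hasDerivAt_gaussPDF (t : ℝ) : HasDerivAt gaussPDF (-t * gaussPDF t) t := by
  have h : HasDerivAt (fun s : ℝ => -s ^ 2 / 2) (-t) t :=
    ((hasDerivAt_pow 2 t).neg.div_const 2).congr_deriv (by norm_num; ring)
  exact (h.exp.const_mul _).congr_deriv (by unfold gaussPDF; ring)

lemma continuous_gaussPDF : Continuous gaussPDF :=
  continuous_iff_continuousAt.mpr fun t => (hasDerivAt_gaussPDF t).continuousAt

lemma tendsto_gaussPDF_cocompact : Tendsto gaussPDF (cocompact ℝ) (𝓝 0) := by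
  have h := (tendsto_rpow_abs_mul_exp_neg_mul_sq_cocompact (by norm_num : (0 : ℝ) < 2⁻¹)
    0).const_mul (Real.sqrt (2 * Real.pi))⁻¹
  rw [mul_zero] at h
  refine h.congr fun t => ?_
  simp only [gaussPDF, Real.rpow_zero, one_mul]
  ring_nf

lemma integral_Ioi_gaussPDF (a : ℝ) : ∫ t in Ioi a, gaussPDF t = 1 - gaussCDF a := by
  have h : ∫ t, gaussPDF t = 1 :=
    gaussPDF_eq_gaussianPDFReal ▸ integral_gaussianPDFReal_eq_one 0 one_ne_zero
  rw [← intervalIntegral.integral_Iic_add_Ioi integrable_gaussPDF.integrableOn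
    integrable_gaussPDF.integrableOn] at h
  rw [gaussCDF]
  linarith

lemma integral_Ioi_mul_gaussPDF (a : ℝ) : ∫ t in Ioi a, t * gaussPDF t = gaussPDF a := by
  have h := integral_Ioi_of_hasDerivAt_of_tendsto (f := fun t => -gaussPDF t) (a := a)
    continuous_gaussPDF.neg.continuousWithinAt
    (fun t _ => (hasDerivAt_gaussPDF t).neg.congr_deriv (by ring)) integrable_mul_gaussPDF.integrableOn
    (by simpa using (tendsto_gaussPDF_cocompact.mono_left atTop_le_cocompact).neg)
  simpa using h

lemma hasDerivAt_gaussCDF (p : ℝ) : HasDerivAt gaussCDF (gaussPDF p) p := by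
  have h : gaussCDF = fun q => gaussCDF 0 + ∫ t in (0 : ℝ)..q, gaussPDF t := by
    ext q
    rw [← intervalIntegral.integral_Iic_sub_Iic integrable_gaussPDF.integrableOn
      integrable_gaussPDF.integrableOn, gaussCDF, gaussCDF]
    ring
  rw [h]
  exact (continuous_gaussPDF.integral_hasStrictDerivAt 0 p).hasDerivAt.const_add _

lemma monotone_gaussCDF : Monotone gaussCDF :=
  monotone_of_deriv_nonneg (fun p => (hasDerivAt_gaussCDF p).differentiableAt)
    fun p => (hasDerivAt_gaussCDF p).deriv ▸ (gaussPDF_pos p).le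

lemma one_sub_gaussCDF_pos (p : ℝ) : 0 < 1 - gaussCDF p :=
  integral_Ioi_gaussPDF p ▸
    setIntegral_Ioi_pos integrable_gaussPDF.integrableOn fun t _ => gaussPDF_pos t

lemma mul_one_sub_gaussCDF_lt_gaussPDF (p : ℝ) : p * (1 - gaussCDF p) < gaussPDF p := by
  -- `∫_{t > p} (t - p) φ(t) dt = φ(p) - p (1 - Φ(p))`, and the integrand is positive.
  have h := setIntegral_Ioi_pos (f := fun t => t * gaussPDF t - p * gaussPDF t)
    (integrable_mul_gaussPDF.sub (integrable_gaussPDF.const_mul p)).integrableOn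
    fun t ht => by rw [← sub_mul]; exact mul_pos (sub_pos.mpr ht) (gaussPDF_pos t)
  rw [integral_sub integrable_mul_gaussPDF.integrableOn
    (integrable_gaussPDF.const_mul p).integrableOn, integral_const_mul,
    integral_Ioi_mul_gaussPDF, integral_Ioi_gaussPDF] at h
  linarith

lemma gaussPDF_mul_mills (p : ℝ) : gaussPDF p * mills p = 1 - gaussCDF p :=
  mul_div_cancel₀ _ (gaussPDF_pos p).ne'

lemma mills_pos (p : ℝ) : 0 < mills p :=
  div_pos (one_sub_gaussCDF_pos p) (gaussPDF_pos p)

lemma hasDerivAt_mills (p : ℝ) : HasDerivAt mills (p * mills p - 1) p := by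
  have h := ((hasDerivAt_gaussCDF p).const_sub 1).div (hasDerivAt_gaussPDF p)
    (gaussPDF_pos p).ne'
  refine h.congr_deriv ?_
  have := (gaussPDF_pos p).ne'
  unfold mills
  field_simp
  ring

lemma strictAnti_mills : StrictAnti mills := by
  refine strictAnti_of_deriv_neg fun p => ?_
  rw [(hasDerivAt_mills p).deriv, sub_neg, mills, mul_div_assoc', div_lt_one (gaussPDF_pos p)]
  exact mul_one_sub_gaussCDF_lt_gaussPDF p

lemma continuous_mills : Continuous mills :=
  continuous_iff_continuousAt.mpr fun p => (hasDerivAt_mills p).continuousAt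

lemma tendsto_mills_atTop : Tendsto mills atTop (𝓝 0) := by
  refine tendsto_of_tendsto_of_tendsto_of_le_of_le' tendsto_const_nhds tendsto_inv_atTop_zero
    (.of_forall fun p => (mills_pos p).le) ?_
  filter_upwards [eventually_gt_atTop 0] with p hp
  rw [mills, div_le_iff₀ (gaussPDF_pos p), inv_mul_eq_div, le_div_iff₀ hp, mul_comm]
  exact (mul_one_sub_gaussCDF_lt_gaussPDF p).le

lemma tendsto_mills_atBot : Tendsto mills atBot atTop := by
  have hinv : Tendsto (fun p => (gaussPDF p)⁻¹) atBot atTop :=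
    (tendsto_nhdsWithin_iff.mpr ⟨tendsto_gaussPDF_cocompact.mono_left atBot_le_cocompact,
      .of_forall gaussPDF_pos⟩).inv_tendsto_nhdsGT_zero
  refine tendsto_atTop_mono' atBot ?_ (hinv.const_mul_atTop (one_sub_gaussCDF_pos 0))
  filter_upwards [eventually_le_atBot 0] with p hp
  rw [mills, div_eq_mul_inv]
  exact mul_le_mul_of_nonneg_right (by linarith [monotone_gaussCDF hp])
    (inv_nonneg.mpr (gaussPDF_pos p).le)

lemma range_mills : range mills = Ioi 0 := by
  refine (range_subset_iff.mpr mills_pos).antisymm fun y (hy : 0 < y) => ?_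
  obtain ⟨a, ha⟩ := (tendsto_mills_atTop.eventually (gt_mem_nhds hy)).exists
  obtain ⟨b, hb⟩ := (tendsto_mills_atBot.eventually_ge_atTop y).exists
  exact intermediate_value_univ a b continuous_mills ⟨ha.le, hb⟩

lemma mills_invFun {y : ℝ} (hy : 0 < y) : mills (invFun mills y) = y :=
  invFun_eq (by rw [range_mills]; exact hy : y ∈ range mills)

lemma strictAntiOn_invFun_mills : StrictAntiOn (invFun mills) (Ioi 0) :=
  fun y₁ hy₁ y₂ hy₂ h => by
    rwa [← strictAnti_mills.lt_iff_gt, mills_invFun hy₁, mills_invFun hy₂]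

lemma tendsto_invFun_mills_atTop : Tendsto (invFun mills) atTop atBot := by
  refine tendsto_atTop_atBot.mpr fun b => ⟨mills b, fun y hy => ?_⟩
  rwa [← strictAnti_mills.le_iff_ge, mills_invFun ((mills_pos b).trans_le hy)]

lemma setIntegral_gaussianReal {s : Set ℝ} (hs : MeasurableSet s) (f : ℝ → ℝ) :
    ∫ t in s, f t ∂gaussianReal 0 1 = ∫ t in s, gaussPDF t * f t := by
  rw [← integral_indicator hs, integral_gaussianReal_eq_integral_smul one_ne_zero,
    ← integral_indicator hs, gaussPDF_eq_gaussianPDFReal]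
  congr 1
  ext t
  by_cases ht : t ∈ s <;> simp [ht]

lemma Agauss_eq {σ : ℝ} (hσ : 0 < σ) (p x : ℝ) :
    Agauss σ p x = (p - x) * (1 - gaussCDF (p / σ)) - σ * gaussPDF (p / σ) := by
  have hset : {t : ℝ | σ * t > p} = Ioi (p / σ) := by
    ext t
    simp [div_lt_iff₀ hσ, mul_comm]
  rw [Agauss, hset, setIntegral_gaussianReal measurableSet_Ioi]
  calc ∫ t in Ioi (p / σ), gaussPDF t * (p - x - σ * t)
      = ∫ t in Ioi (p / σ), ((p - x) * gaussPDF t - σ * (t * gaussPDF t)) := by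
        congr 1; ext t; ring
    _ = _ := by
        rw [integral_sub (integrable_gaussPDF.const_mul _).integrableOn
          (integrable_mul_gaussPDF.const_mul _).integrableOn, integral_const_mul,
          integral_const_mul, integral_Ioi_gaussPDF, integral_Ioi_mul_gaussPDF]

lemma hasDerivAt_Agauss {σ : ℝ} (hσ : 0 < σ) (x p : ℝ) :
    HasDerivAt (fun q => Agauss σ q x) (gaussPDF (p / σ) * (mills (p / σ) + x / σ)) p := by
  have hdiv : HasDerivAt (fun q : ℝ => q / σ) σ⁻¹ p := by
    simpa using (hasDerivAt_id p).div_const σ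
  have h := (((hasDerivAt_id p).sub_const x).mul
    (((hasDerivAt_gaussCDF (p / σ)).comp p hdiv).const_sub 1)).sub
    (((hasDerivAt_gaussPDF (p / σ)).comp p hdiv).const_mul σ)
  rw [funext fun q => Agauss_eq hσ q x]
  refine h.congr_deriv ?_
  simp only [Function.comp_apply, id]
  rw [mul_add, gaussPDF_mul_mills]
  field_simp
  ring

lemma Agauss_lt_of_mills_eq {σ x c p : ℝ} (hσ : 0 < σ) (hc : mills (c / σ) = -x / σ)
    (hp : p ≠ c) : Agauss σ p x < Agauss σ c x := by
  refine lt_of_hasDerivAt_pos_of_neg (hasDerivAt_Agauss hσ x) (fun q hq => ?_) (fun q hq => ?_) hp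
  · have h := strictAnti_mills (div_lt_div_of_pos_right hq hσ)
    rw [hc, neg_div] at h
    exact mul_pos (gaussPDF_pos _) (by linarith)
  · have h := strictAnti_mills (div_lt_div_of_pos_right hq hσ)
    rw [hc, neg_div] at h
    exact mul_neg_of_pos_of_neg (gaussPDF_pos _) (by linarith)

/-- Property (ii) in the proof of the paper's Lemma 6.3: for `σ > 0` there is a map
`p_σ` such that for each `x < 0`, `p_σ(x)` is the unique maximizer of `p ↦ A_σ(p; x)`,
it satisfies `m(p_σ(x)/σ) = −x/σ` (i.e. `p_σ(x) = σ·m⁻¹(−x/σ)`, the inverse `minv` of the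
Mills ratio being exhibited explicitly), `p_σ` is strictly increasing on `(−∞, 0)`, and
`p_σ(x) → −∞` as `x → −∞`. -/
theorem stmt7 (σ : ℝ) (hσ : 0 < σ) :
    ∃ pσ : ℝ → ℝ, ∃ minv : ℝ → ℝ,
      (∀ p : ℝ, minv (mills p) = p) ∧
      (∀ y > (0 : ℝ), mills (minv y) = y) ∧
      (∀ x < (0 : ℝ),
        (∀ p : ℝ, Agauss σ p x ≤ Agauss σ (pσ x) x) ∧
        (∀ q : ℝ, (∀ p : ℝ, Agauss σ p x ≤ Agauss σ q x) → q = pσ x) ∧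
        pσ x = σ * minv (-x / σ)) ∧
      StrictMonoOn pσ (Iio 0) ∧
      Tendsto pσ atBot atBot := by
  have hy : ∀ x < (0 : ℝ), 0 < -x / σ := fun x hx => div_pos (neg_pos.mpr hx) hσ
  have hmax : ∀ x < (0 : ℝ), ∀ p ≠ σ * invFun mills (-x / σ),
      Agauss σ p x < Agauss σ (σ * invFun mills (-x / σ)) x := fun x hx p hp =>
    Agauss_lt_of_mills_eq hσ (by rw [mul_div_cancel_left₀ _ hσ.ne', mills_invFun (hy x hx)]) hp
  refine ⟨fun x => σ * invFun mills (-x / σ), invFun mills,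
    leftInverse_invFun strictAnti_mills.injective, fun y hy => mills_invFun hy,
    fun x hx => ⟨fun p => ?_, fun q hq => ?_, rfl⟩, fun x₁ hx₁ x₂ hx₂ h => ?_, ?_⟩
  · rcases eq_or_ne p (σ * invFun mills (-x / σ)) with rfl | hp
    exacts [le_rfl, (hmax x hx p hp).le]
  · by_contra hne
    exact (hq _).not_gt (hmax x hx q hne)
  · exact mul_lt_mul_of_pos_left (strictAntiOn_invFun_mills (hy x₂ hx₂) (hy x₁ hx₁)
      (div_lt_div_of_pos_right (neg_lt_neg h) hσ)) hσ
  · exact (tendsto_invFun_mills_atTop.comp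
      (tendsto_neg_atBot_atTop.atTop_div_const hσ)).const_mul_atBot hσ
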